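/- arXiv:2107.10681 — 2 statements merged into one kernel-verified Lean document; each statement's English description precedes it below -/
import Mathlib

section
/- The projection (L, V) ↦ L from the space Del^(n)_{(r,R)}(ℝ^d) of pairs consisting of an (r,R)-Delone set L and an n-point subset V ⊂ L (with the topology inherited from the product of the pattern space and the Hausdorff metric space of compact sets) to the space Del_{(r,R)}(ℝ^d) of (r,R)-Delone sets is a local homeomorphism. -/
open Metric Set

noncomputable section

/-- Euclidean space `ℝ^d`. -/
abbrev Euc (d : ℕ) := EuclideanSpace ℝ (Fin d)

/-- The truncation `Λ[s] = (Λ ∩ B(0,s)) ∪ ∂B(0,s)`. -/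
def cutP {d : ℕ} (Λ : Set (Euc d)) (s : ℝ) : Set (Euc d) :=
  (Λ ∩ Metric.closedBall 0 s) ∪ Metric.sphere 0 s

/-- The pattern distance
`D(Λ,Λ') = inf {1/(1+s) : d_H(Λ[s],Λ'[s]) < 1/s}` on subsets of `ℝ^d`. -/
noncomputable def patternDist {d : ℕ} (Λ Λ' : Set (Euc d)) : ℝ :=
  sInf {t : ℝ | ∃ s : ℝ, 0 < s ∧ t = 1 / (1 + s) ∧
    Metric.hausdorffDist (cutP Λ s) (cutP Λ' s) < 1 / s}

/-- `L` is `r`-uniformly discrete: every closed ball of radius `r` contains at most one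
point of `L`. -/
def IsUniformlyDiscrete {d : ℕ} (r : ℝ) (L : Set (Euc d)) : Prop :=
  ∀ x : Euc d, (L ∩ Metric.closedBall x r).Subsingleton

/-- `L` is `R`-relatively dense: every closed ball of radius `R` contains at least one
point of `L`. -/
def IsRelativelyDense {d : ℕ} (R : ℝ) (L : Set (Euc d)) : Prop :=
  ∀ x : Euc d, (L ∩ Metric.closedBall x R).Nonempty

/-- An `(r,R)`-Delone set. -/
def IsDelone {d : ℕ} (r R : ℝ) (L : Set (Euc d)) : Prop :=
  IsUniformlyDiscrete r L ∧ IsRelativelyDense R L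

/-- The space `C(ℝ^d)` of closed subsets of `ℝ^d`. -/
def ClosedSubsets (d : ℕ) := {s : Set (Euc d) // IsClosed s}

/-- The topology of the pattern metric `D` on `C(ℝ^d)`: the topology generated by the
open `D`-balls. -/
instance ClosedSubsets.instTopologicalSpace (d : ℕ) : TopologicalSpace (ClosedSubsets d) :=
  TopologicalSpace.generateFrom
    {U | ∃ (Λ : ClosedSubsets d) (ε : ℝ), 0 < ε ∧ U = {Λ' | patternDist Λ.1 Λ'.1 < ε}}

/-- Translation `t_x(Λ) = Λ - x` on the space of closed subsets. -/
def translateP {d : ℕ} (x : Euc d) (Λ : ClosedSubsets d) : ClosedSubsets d :=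
  ⟨(fun y => y - x) '' Λ.1, by
    simpa using (Homeomorph.subRight x).isClosedMap Λ.1 Λ.2⟩

open TopologicalSpace

/-- The space `Del_{(r,R)}(ℝ^d)` of `(r,R)`-Delone sets, as a subspace of the pattern
space `(C(ℝ^d), D)`. -/
def DeloneSpace (d : ℕ) (r R : ℝ) := {L : ClosedSubsets d // IsDelone r R L.1}

instance (d : ℕ) (r R : ℝ) : TopologicalSpace (DeloneSpace d r R) :=
  instTopologicalSpaceSubtype

/-- The space `Del^(n)_{(r,R)}(ℝ^d)` of pairs `(L, V)` of an `(r,R)`-Delone set `L`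
together with an `n`-point subset `V ⊆ L`, topologized as a subspace of the product of the
pattern space and the Hausdorff-metric space of nonempty compact subsets of `ℝ^d`. -/
def DelPair (d : ℕ) (r R : ℝ) (n : ℕ) :=
  {p : ClosedSubsets d × NonemptyCompacts (Euc d) //
    IsDelone r R p.1.1 ∧ (p.2 : Set (Euc d)) ⊆ p.1.1 ∧ (p.2 : Set (Euc d)).ncard = n}

instance (d : ℕ) (r R : ℝ) (n : ℕ) : TopologicalSpace (DelPair d r R n) :=
  instTopologicalSpaceSubtype

/-- The covering projection `(L, V) ↦ L`. -/
def delPairProj (d : ℕ) (r R : ℝ) (n : ℕ) (p : DelPair d r R n) : DeloneSpace d r R :=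
  ⟨p.1.1, p.2.1⟩

/-! A continuous, open, locally injective map is a local homeomorphism, and the projection is
all three. It is locally injective because `r`-uniform discreteness of `L` lets one recover a
finite `V ⊆ L` from any compact `V₀` within Hausdorff distance `r / 2` of it, as
`L ∩ thickening (r / 2) V₀`. It is open because when `L'` is pattern-close to `L`, i.e.
`L'[s]` is within `1 / s` of `L[s]` for some large `s`, every point of `V` has a point of `L'`
within `1 / s`; once `2 / s ≤ r` these points are distinct, so they form an `n`-point subset of
`L'` close to `V`. -/

open Filter Topology

theorem IsOpenMap.isLocalHomeomorph {X Y : Type*} [TopologicalSpace X] [TopologicalSpace Y]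
    {f : X → Y} (hf : IsOpenMap f) (hc : Continuous f) (hi : IsLocallyInjective f) :
    IsLocalHomeomorph f :=
  isLocalHomeomorph_iff_isOpenEmbedding_restrict.2 fun x => by
    obtain ⟨U, hU, hx, hinj⟩ := hi x
    exact ⟨U, hU.mem_nhds hx, .of_continuous_injective_isOpenMap
      (hc.comp continuous_subtype_val) (injOn_iff_injective.1 hinj) (hf.domRestrict hU)⟩

theorem hausdorffDist_image_le {α : Type*} [PseudoMetricSpace α] {f : α → α} {V : Set α}
    {δ : ℝ} (hδ : 0 ≤ δ) (h : ∀ v ∈ V, dist (f v) v ≤ δ) : hausdorffDist (f '' V) V ≤ δ :=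
  hausdorffDist_le_of_mem_dist hδ (forall_mem_image.2 fun v hv => ⟨v, hv, h v hv⟩)
    fun v hv => ⟨f v, mem_image_of_mem f hv, by rw [dist_comm]; exact h v hv⟩

section PatternDistance

variable {d : ℕ}

theorem cutP_subset_closedBall (Λ : Set (Euc d)) (s : ℝ) : cutP Λ s ⊆ closedBall 0 s :=
  union_subset inter_subset_right sphere_subset_closedBall

theorem cutP_nonempty (hd : 0 < d) (Λ : Set (Euc d)) {s : ℝ} (hs : 0 ≤ s) :
    (cutP Λ s).Nonempty := by
  have : Nonempty (Fin d) := ⟨⟨0, hd⟩⟩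
  exact (NormedSpace.sphere_nonempty.2 hs).mono subset_union_right

theorem hausdorffEDist_cutP_ne_top (hd : 0 < d) (Λ Λ' : Set (Euc d)) {s : ℝ} (hs : 0 ≤ s) :
    hausdorffEDist (cutP Λ s) (cutP Λ' s) ≠ ⊤ :=
  hausdorffEDist_ne_top_of_nonempty_of_bounded (cutP_nonempty hd Λ hs) (cutP_nonempty hd Λ' hs)
    (isBounded_closedBall.subset (cutP_subset_closedBall Λ s))
    (isBounded_closedBall.subset (cutP_subset_closedBall Λ' s))

theorem hausdorffDist_cutP_le (hd : 0 < d) (Λ Λ' : Set (Euc d)) {s : ℝ} (hs : 0 ≤ s) :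
    hausdorffDist (cutP Λ s) (cutP Λ' s) ≤ 2 * s :=
  (hausdorffDist_le_diam (cutP_nonempty hd Λ hs)
      (isBounded_closedBall.subset (cutP_subset_closedBall Λ s)) (cutP_nonempty hd Λ' hs)
      (isBounded_closedBall.subset (cutP_subset_closedBall Λ' s))).trans <|
    (diam_mono (union_subset (cutP_subset_closedBall Λ s) (cutP_subset_closedBall Λ' s))
      isBounded_closedBall).trans (diam_closedBall hs)

theorem patternDist_lt_of_hausdorffDist_cutP_lt {Λ Λ' : Set (Euc d)} {s ε : ℝ} (hs : 0 < s)
    (hε : 1 / (1 + s) < ε) (hH : hausdorffDist (cutP Λ s) (cutP Λ' s) < 1 / s) :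
    patternDist Λ Λ' < ε := by
  unfold patternDist
  refine csInf_lt_of_lt ⟨0, ?_⟩ ⟨s, hs, rfl, hH⟩ hε
  rintro _ ⟨s, hs, rfl, -⟩
  positivity

theorem patternDist_self_lt (Λ : Set (Euc d)) {ε : ℝ} (hε : 0 < ε) : patternDist Λ Λ < ε := by
  refine patternDist_lt_of_hausdorffDist_cutP_lt (s := 1 / ε) (by positivity) ?_ ?_
  · rw [div_lt_iff₀ (by positivity)]
    nlinarith [mul_div_cancel₀ (1 : ℝ) hε.ne']
  · rw [hausdorffDist_self_zero]
    positivity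

theorem exists_hausdorffDist_cutP_lt_of_patternDist_lt (hd : 0 < d) {Λ Λ' : Set (Euc d)}
    {s₀ : ℝ} (hs₀ : 0 ≤ s₀) (h : patternDist Λ Λ' < 1 / (1 + s₀)) :
    ∃ s, s₀ < s ∧ hausdorffDist (cutP Λ s) (cutP Λ' s) < 1 / s := by
  have hhalf : hausdorffDist (cutP Λ (1 / 2)) (cutP Λ' (1 / 2)) < 1 / (1 / 2) := by
    linarith [hausdorffDist_cutP_le hd Λ Λ' (s := 1 / 2) (by norm_num)]
  unfold patternDist at h
  obtain ⟨_, ⟨s, hs, rfl, hH⟩, hlt⟩ := exists_lt_of_csInf_lt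
    (by exact ⟨_, _, by norm_num, rfl, hhalf⟩) h
  refine ⟨s, ?_, hH⟩
  linarith [(one_div_lt_one_div (by positivity) (by positivity)).1 hlt]

theorem eventually_exists_hausdorffDist_cutP_lt (hd : 0 < d) (Λ : ClosedSubsets d) (s₀ : ℝ) :
    ∀ᶠ Λ' in 𝓝 Λ, ∃ s, s₀ < s ∧ hausdorffDist (cutP Λ.1 s) (cutP Λ'.1 s) < 1 / s := by
  have hε : 0 < 1 / (1 + max s₀ 0) := by positivity
  have hball : {Λ' : ClosedSubsets d | patternDist Λ.1 Λ'.1 < 1 / (1 + max s₀ 0)} ∈ 𝓝 Λ :=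
    (isOpen_generateFrom_of_mem (by exact ⟨Λ, _, hε, rfl⟩)).mem_nhds (patternDist_self_lt Λ.1 hε)
  filter_upwards [hball] with Λ' h
  obtain ⟨s, hs, hH⟩ := exists_hausdorffDist_cutP_lt_of_patternDist_lt hd (le_max_right _ _) h
  exact ⟨s, (le_max_left _ _).trans_lt hs, hH⟩

theorem exists_mem_dist_lt_of_hausdorffDist_cutP_lt (hd : 0 < d) {L L' : Set (Euc d)} {s : ℝ}
    (hs : 0 < s) {v : Euc d} (hv : v ∈ L) (hvs : ‖v‖ + 1 / s ≤ s)
    (hH : hausdorffDist (cutP L s) (cutP L' s) < 1 / s) : ∃ y ∈ L', dist y v < 1 / s := by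
  have hs' : 0 < 1 / s := by positivity
  have hvc : v ∈ cutP L s := Or.inl ⟨hv, mem_closedBall_zero_iff.2 (by linarith)⟩
  obtain ⟨y, hy | hy, hvy⟩ :=
    exists_dist_lt_of_hausdorffDist_lt hvc hH (hausdorffEDist_cutP_ne_top hd L L' hs.le)
  · exact ⟨y, hy.1, by rwa [dist_comm]⟩
  · -- on the sphere `‖y‖ = s`, `y` would be at distance `≥ s - ‖v‖ ≥ 1 / s` from `v`
    have hgap := norm_sub_norm_le y v
    rw [← dist_eq_norm, dist_comm, mem_sphere_zero_iff_norm.1 hy] at hgap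
    linarith

end PatternDistance

namespace IsUniformlyDiscrete

variable {d : ℕ} {r : ℝ} {L : Set (Euc d)}

theorem eq_of_dist_le (hL : IsUniformlyDiscrete r L) {x y : Euc d} (hx : x ∈ L) (hy : y ∈ L)
    (h : dist x y ≤ r) : x = y :=
  hL x ⟨hx, mem_closedBall_self (dist_nonneg.trans h)⟩ ⟨hy, mem_closedBall'.2 h⟩

theorem exists_injOn_of_forall_exists_dist_lt (hL : IsUniformlyDiscrete r L)
    {V L' : Set (Euc d)} (hVL : V ⊆ L) {δ : ℝ} (hδ : 2 * δ ≤ r)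
    (h : ∀ v ∈ V, ∃ y ∈ L', dist y v < δ) :
    ∃ g : Euc d → Euc d, MapsTo g V L' ∧ InjOn g V ∧ ∀ v ∈ V, dist (g v) v < δ := by
  choose! g hgL hgv using h
  refine ⟨g, hgL, fun v hv w hw hvw => hL.eq_of_dist_le (hVL hv) (hVL hw) ?_, hgv⟩
  calc dist v w ≤ dist (g v) v + dist (g v) w := dist_triangle_left _ _ _
    _ = dist (g v) v + dist (g w) w := by rw [hvw]
    _ ≤ r := by linarith [hgv v hv, hgv w hw]

theorem eq_inter_thickening (hL : IsUniformlyDiscrete r L) {V V₀ : NonemptyCompacts (Euc d)}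
    (hVL : (V : Set (Euc d)) ⊆ L) (h : dist V V₀ < r / 2) :
    (V : Set (Euc d)) = L ∩ thickening (r / 2) V₀ := by
  have hfin : hausdorffEDist (V : Set (Euc d)) V₀ ≠ ⊤ :=
    hausdorffEDist_ne_top_of_nonempty_of_bounded V.nonempty V₀.nonempty V.isCompact.isBounded
      V₀.isCompact.isBounded
  ext x
  refine ⟨fun hx => ⟨hVL hx, mem_thickening_iff.2 (exists_dist_lt_of_hausdorffDist_lt hx h hfin)⟩,
    fun ⟨hxL, hx⟩ => ?_⟩
  obtain ⟨v₀, hv₀, hxv₀⟩ := mem_thickening_iff.1 hx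
  obtain ⟨v, hv, hvv₀⟩ := exists_dist_lt_of_hausdorffDist_lt' hv₀ h hfin
  rwa [hL.eq_of_dist_le hxL (hVL hv) (by linarith [dist_triangle_right x v v₀])]

end IsUniformlyDiscrete

section DelPair

variable {d : ℕ} {r R : ℝ} {n : ℕ}

theorem continuous_delPairProj : Continuous (delPairProj d r R n) :=
  (continuous_fst.comp continuous_subtype_val).subtype_mk _

theorem injOn_delPairProj (p : DelPair d r R n) :
    {q : DelPair d r R n | dist q.1.2 p.1.2 < r / 2}.InjOn (delPairProj d r R n) := by
  intro q hq q' hq' h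
  have hL : q.1.1 = q'.1.1 := congrArg Subtype.val h
  refine Subtype.ext (Prod.ext hL (NonemptyCompacts.ext ?_))
  rw [q.2.1.1.eq_inter_thickening q.2.2.1 hq, q'.2.1.1.eq_inter_thickening q'.2.2.1 hq', hL]

theorem isLocallyInjective_delPairProj (hr : 0 < r) :
    IsLocallyInjective (delPairProj d r R n) := fun p =>
  ⟨_, isOpen_ball.preimage (continuous_snd.comp continuous_subtype_val),
    show dist p.1.2 p.1.2 < r / 2 by rw [dist_self]; positivity, injOn_delPairProj p⟩

theorem eventually_exists_delPairProj_eq (hd : 0 < d) (hr : 0 < r) (hn : 0 < n)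
    (p : DelPair d r R n) {η : ℝ} (hη : 0 < η) :
    ∀ᶠ L in 𝓝 (delPairProj d r R n p),
      ∃ q : DelPair d r R n, delPairProj d r R n q = L ∧ dist q.1.2 p.1.2 < η := by
  set V := p.1.2
  obtain ⟨m, hm⟩ := V.isCompact.isBounded.subset_closedBall 0
  have hinv : Tendsto (fun s : ℝ => 1 / s) atTop (𝓝 0) := by
    simpa only [one_div] using tendsto_inv_atTop_zero
  obtain ⟨s₀, hs₀⟩ := eventually_atTop.1 <|
    (eventually_gt_atTop 0).and <| (eventually_ge_atTop (m + 1)).and <|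
      (hinv.eventually (gt_mem_nhds one_pos)).and <|
      (hinv.eventually (gt_mem_nhds (half_pos hr))).and (hinv.eventually (gt_mem_nhds hη))
  filter_upwards [(continuous_subtype_val.tendsto _).eventually
    (eventually_exists_hausdorffDist_cutP_lt hd p.1.1 s₀)] with L ⟨s, hs, hH⟩
  obtain ⟨hs0, hsm, hs1, hsr, hsη⟩ := hs₀ s hs.le
  have hnear : ∀ v ∈ (V : Set (Euc d)), ∃ y ∈ L.1.1, dist y v < 1 / s := fun v hv =>
    exists_mem_dist_lt_of_hausdorffDist_cutP_lt hd hs0 (p.2.2.1 hv)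
      (by linarith [mem_closedBall_zero_iff.1 (hm hv)]) hH
  obtain ⟨g, hgL, hg, hgv⟩ :=
    p.2.1.1.exists_injOn_of_forall_exists_dist_lt p.2.2.1 (by linarith) hnear
  have hfin : (V : Set (Euc d)).Finite := finite_of_ncard_pos (p.2.2.2 ▸ hn)
  refine ⟨⟨(L.1, ⟨⟨g '' V, (hfin.image g).isCompact⟩, V.nonempty.image g⟩), L.2,
    hgL.image_subset, hg.ncard_image.trans p.2.2.2⟩, rfl, ?_⟩
  exact (hausdorffDist_image_le (by positivity) fun v hv => (hgv v hv).le).trans_lt hsη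

theorem isOpenMap_delPairProj (hd : 0 < d) (hr : 0 < r) (hn : 0 < n) :
    IsOpenMap (delPairProj d r R n) := by
  refine IsOpenMap.of_nhds_le fun p S hS => ?_
  obtain ⟨T, hT, hTS⟩ := (mem_nhds_subtype _ p _).1 (mem_map.1 hS)
  obtain ⟨A, hA, B, hB, hAB⟩ := mem_nhds_prod_iff.1 hT
  obtain ⟨η, hη, hηB⟩ := Metric.mem_nhds_iff.1 hB
  filter_upwards [eventually_exists_delPairProj_eq hd hr hn p hη,
    continuous_subtype_val.continuousAt.preimage_mem_nhds hA] with L ⟨q, hqL, hq⟩ hL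
  subst hqL
  exact hTS (hAB ⟨hL, hηB hq⟩)

end DelPair

theorem delPairProj_isLocalHomeomorph_general (d : ℕ) (hd : 0 < d) (r R : ℝ) (hr : 0 < r)
    (n : ℕ) (hn : 0 < n) :
    IsLocalHomeomorph (delPairProj d r R n) :=
  (isOpenMap_delPairProj hd hr hn).isLocalHomeomorph continuous_delPairProj
    (isLocallyInjective_delPairProj hr)

/-- The projection `(L, V) ↦ L` from the space `Del^(n)_{(r,R)}(ℝ^d)` of
pairs of an `(r,R)`-Delone set `L` and an `n`-point subset `V ⊆ L` to the space
`Del_{(r,R)}(ℝ^d)` of `(r,R)`-Delone sets is a local homeomorphism. -/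
theorem delPairProj_isLocalHomeomorph (d : ℕ) (hd : 0 < d) (r R : ℝ) (hr : 0 < r)
    (hrR : r < R) (n : ℕ) (hn : 0 < n) :
    IsLocalHomeomorph (delPairProj d r R n) :=
  delPairProj_isLocalHomeomorph_general d hd r R hr n hn
end
end

section
/- The order cover ÔDel^(n)_{(r,R)}(ℝ^d), whose points are triples (L, V, χ_V) with (L,V) ∈ Del^(n)_{(r,R)}(ℝ^d) and χ_V: {1,...,n} → V a bijection, carries a topology with neighborhood base U^ε_M(L,V,χ_V) = {(L',V', g∘χ_V) : (L',V') ∈ U^ε_M(L,V)} (g the canonical bijection V → V') making the projection (L,V,χ_V) ↦ (L,V) a covering map with fibers of cardinality n!. -/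
open Metric Set

noncomputable section

open TopologicalSpace

/-- The order cover `ÔDel^(n)_{(r,R)}(ℝ^d)`: triples `(L, V, χ_V)` where
`(L,V) ∈ Del^(n)_{(r,R)}(ℝ^d)` and `χ_V : {1,…,n} → V` is a bijection (encoded as an
injective-onto-`V` tuple `Fin n → ℝ^d`), topologized as a subspace of the product. -/
def OrderCover (d : ℕ) (r R : ℝ) (n : ℕ) :=
  {q : DelPair d r R n × (Fin n → Euc d) // Set.range q.2 = (q.1.1.2 : Set (Euc d))}

instance (d : ℕ) (r R : ℝ) (n : ℕ) : TopologicalSpace (OrderCover d r R n) :=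
  instTopologicalSpaceSubtype

/-- The covering projection `(L, V, χ_V) ↦ (L, V)`. -/
def ocProj (d : ℕ) (r R : ℝ) (n : ℕ) (q : OrderCover d r R n) : DelPair d r R n := q.1.1

/-!
Over a neighbourhood `U` of `(L₀, V₀)` on which the Hausdorff distance `d_H(V, V₀)` stays
below `r/2`, sending each point of `V` to the unique point of `V₀` within `r/2` of it is a
bijection `V → V₀` (both sets are `r`-separated); it depends locally constantly on the point
and continuously on `(L, V)`. Composing enumerations of `V` with it identifies the part of the
order cover over `U` with `U × {enumerations of V₀}`, and the latter factor is discrete because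
two distinct enumerations of an `r`-separated set differ by more than `r` in some coordinate.
Enumerations of an `n`-point set by `Fin n` are its bijections with `Fin n`: there are `n!`.
-/

open Function Filter Topology
open scoped Nat

section NearPoint

variable {E : Type*} [PseudoMetricSpace E] {A : Set E} {r : ℝ} {x a : E}

open Classical in
def nearPoint (A : Set E) (ε : ℝ) (x : E) : E :=
  if h : ∃ a ∈ A, dist x a < ε then h.choose else x

theorem nearPoint_mem_and_dist_lt {ε : ℝ} (h : ∃ a ∈ A, dist x a < ε) :
    nearPoint A ε x ∈ A ∧ dist x (nearPoint A ε x) < ε := by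
  rw [nearPoint, dif_pos h]
  exact h.choose_spec

theorem nearPoint_eq (hA : A.Pairwise (r < dist · ·)) (ha : a ∈ A) (hxa : dist x a < r / 2) :
    nearPoint A (r / 2) x = a := by
  obtain ⟨hmem, hdist⟩ := nearPoint_mem_and_dist_lt ⟨a, ha, hxa⟩
  by_contra hne
  have := dist_triangle_left (nearPoint A (r / 2) x) a x
  linarith [hA hmem ha hne]

theorem continuousAt_nearPoint (hA : A.Pairwise (r < dist · ·))
    (h : ∃ a ∈ A, dist x a < r / 2) : ContinuousAt (nearPoint A (r / 2)) x := by
  obtain ⟨a, ha, hxa⟩ := h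
  refine continuousAt_const.congr (?_ : ∀ᶠ y in 𝓝 x, a = nearPoint A (r / 2) y)
  filter_upwards [isOpen_ball.mem_nhds (mem_ball.2 hxa)] with y hy
  exact (nearPoint_eq hA ha hy).symm

end NearPoint

section NonemptyCompacts

variable {E : Type*} [MetricSpace E] {K K' : NonemptyCompacts E} {r ε : ℝ} {x : E}

theorem NonemptyCompacts.exists_dist_lt_of_dist_lt (h : dist K K' < ε) (hx : x ∈ K) :
    ∃ y ∈ K', dist x y < ε :=
  exists_dist_lt_of_hausdorffDist_lt hx h <| hausdorffEDist_ne_top_of_nonempty_of_bounded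
    K.nonempty K'.nonempty K.isCompact.isBounded K'.isCompact.isBounded

theorem nearPoint_nearPoint (hK : (K : Set E).Pairwise (r < dist · ·))
    (hKK' : dist K K' < r / 2) (hx : x ∈ K) :
    nearPoint K (r / 2) (nearPoint K' (r / 2) x) = x := by
  refine nearPoint_eq hK hx ?_
  rw [dist_comm]
  exact (nearPoint_mem_and_dist_lt (NonemptyCompacts.exists_dist_lt_of_dist_lt hKK' hx)).2

theorem image_nearPoint (hK' : (K' : Set E).Pairwise (r < dist · ·))
    (hKK' : dist K K' < r / 2) : nearPoint K' (r / 2) '' (K : Set E) = K' := by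
  refine Subset.antisymm ?_ fun a ha => ?_
  · rintro _ ⟨x, hx, rfl⟩
    exact (nearPoint_mem_and_dist_lt (NonemptyCompacts.exists_dist_lt_of_dist_lt hKK' hx)).1
  · rw [dist_comm] at hKK'
    obtain ⟨x, hx, hax⟩ := NonemptyCompacts.exists_dist_lt_of_dist_lt hKK' ha
    exact ⟨x, hx, nearPoint_eq hK' ha (by rwa [dist_comm])⟩

theorem range_nearPoint_comp {n : ℕ} {f : Fin n → E}
    (hK' : (K' : Set E).Pairwise (r < dist · ·)) (hKK' : dist K K' < r / 2) (hf : range f = K) :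
    range (nearPoint K' (r / 2) ∘ f) = K' := by
  rw [range_comp, hf, image_nearPoint hK' hKK']

theorem continuousAt_nearPoint_of_continuousAt {B : Type*} [TopologicalSpace B]
    {V : B → NonemptyCompacts E} {b : B} (hV : ContinuousAt V b)
    (hsep : ∀ b, (V b : Set E).Pairwise (r < dist · ·)) {y : E}
    (hy : ∃ c ∈ V b, dist y c < r / 2) :
    ContinuousAt (fun b => nearPoint (V b) (r / 2) y) b := by
  obtain ⟨hc, hyc⟩ := nearPoint_mem_and_dist_lt hy
  set c := nearPoint (V b) (r / 2) y
  refine Metric.continuousAt_iff'.2 fun η hη => ?_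
  have hδ : 0 < min η (r / 2 - dist y c) := lt_min hη (by linarith)
  filter_upwards [Metric.continuousAt_iff'.1 hV _ hδ] with b' hb'
  rw [dist_comm] at hb'
  obtain ⟨x, hx, hcx⟩ := NonemptyCompacts.exists_dist_lt_of_dist_lt hb' hc
  have hyx : dist y x < r / 2 := by
    linarith [dist_triangle y c x, min_le_right η (r / 2 - dist y c)]
  rw [nearPoint_eq (hsep b') hx hyx, dist_comm]
  exact hcx.trans_le (min_le_left _ _)

end NonemptyCompacts

section Enumerations

variable {α : Type*} {s : Set α} {n : ℕ}

def rangeEqEquiv (hs : Nat.card s = n) : {f : Fin n → α // range f = s} ≃ (Fin n ≃ s) where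
  toFun f := Equiv.ofBijective (fun i => ⟨f.1 i, f.2.subset (mem_range_self i)⟩) <|
    (Nat.bijective_iff_surjective_and_card _).2
      ⟨fun x => by
        obtain ⟨i, hi⟩ := f.2.superset x.2
        exact ⟨i, Subtype.ext hi⟩, by rw [Nat.card_fin, hs]⟩
  invFun e := ⟨Subtype.val ∘ e, by rw [range_comp, e.range_eq_univ, image_univ,
    Subtype.range_coe]⟩
  left_inv _ := rfl
  right_inv _ := Equiv.ext fun _ => rfl

theorem Set.Finite.card_subtype_range_eq (hs : s.Finite) (hn : s.ncard = n) :
    Nat.card {f : Fin n → α // range f = s} = n ! := by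
  have hcard : Nat.card s = n := by rw [Nat.card_coe_set_eq, hn]
  have : Finite s := hs
  rw [Nat.card_congr (rangeEqEquiv hcard),
    Nat.card_congr (Equiv.equivCongr (Equiv.refl _) (Finite.equivFinOfCardEq hcard)),
    Nat.card_perm, Nat.card_fin]

variable {E : Type*} [PseudoMetricSpace E] {r : ℝ} {ι : Type*} [Fintype ι]

theorem discreteTopology_subtype_range_eq {K : Set E} (hr : 0 < r)
    (hK : K.Pairwise (r < dist · ·)) : DiscreteTopology {f : ι → E // range f = K} := by
  refine DiscreteTopology.of_forall_le_dist hr fun f g hfg => ?_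
  obtain ⟨i, hi⟩ : ∃ i, f.1 i ≠ g.1 i := by
    by_contra! h
    exact hfg (Subtype.ext (funext h))
  have hf : f.1 i ∈ K := f.2.subset (mem_range_self i)
  have hg : g.1 i ∈ K := g.2.subset (mem_range_self i)
  exact (hK hf hg hi).le.trans (dist_le_pi_dist f.1 g.1 i)

end Enumerations

section

variable {B E : Type*} [MetricSpace E] {n : ℕ}

def EnumBundle (V : B → NonemptyCompacts E) (n : ℕ) :=
  {q : B × (Fin n → E) // range q.2 = V q.1}

variable {V : B → NonemptyCompacts E}

namespace EnumBundle

def proj (q : EnumBundle V n) : B := q.1.1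

def fiberEquiv (b : B) :
    {q : EnumBundle V n // proj q = b} ≃ {f : Fin n → E // range f = V b} where
  toFun q := ⟨q.1.1.2, q.1.2.trans (congrArg (fun b => (V b : Set E)) q.2)⟩
  invFun f := ⟨⟨(b, f.1), f.2⟩, rfl⟩
  left_inv := by
    rintro ⟨q, rfl⟩
    rfl
  right_inv _ := rfl

theorem card_fiber {b : B} (hfin : (V b : Set E).Finite) (hn : (V b : Set E).ncard = n) :
    Nat.card {q : EnumBundle V n // proj q = b} = n ! :=
  (Nat.card_congr (fiberEquiv b)).trans (hfin.card_subtype_range_eq hn)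

variable [TopologicalSpace B] {r : ℝ}

instance : TopologicalSpace (EnumBundle V n) := instTopologicalSpaceSubtype

theorem continuous_proj : Continuous (proj : EnumBundle V n → B) :=
  continuous_fst.comp continuous_subtype_val

def localTriv (hV : Continuous V) (hr : 0 < r)
    (hsep : ∀ b, (V b : Set E).Pairwise (r < dist · ·)) (b₀ : B) :
    (proj : EnumBundle V n → B) ⁻¹' (V ⁻¹' ball (V b₀) (r / 2)) ≃ₜ
      (V ⁻¹' ball (V b₀) (r / 2)) × {f : Fin n → E // range f = V b₀} where
  toFun q := (⟨proj q.1, q.2⟩, ⟨nearPoint (V b₀) (r / 2) ∘ q.1.1.2,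
    range_nearPoint_comp (hsep b₀) q.2 q.1.2⟩)
  invFun p := ⟨⟨(p.1.1, nearPoint (V p.1.1) (r / 2) ∘ p.2.1),
    range_nearPoint_comp (hsep _) (mem_ball'.1 p.1.2) p.2.2⟩, p.1.2⟩
  left_inv q := Subtype.ext <| Subtype.ext <| Prod.ext rfl <| funext fun i =>
    nearPoint_nearPoint (hsep _) q.2 (q.1.2.subset (mem_range_self i))
  right_inv p := Prod.ext rfl <| Subtype.ext <| funext fun i =>
    nearPoint_nearPoint (hsep b₀) (mem_ball'.1 p.1.2) (p.2.2.subset (mem_range_self i))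
  continuous_toFun := by
    refine .prodMk ((continuous_proj.comp continuous_subtype_val).subtype_mk _)
      (.subtype_mk (continuous_pi fun i => continuous_iff_continuousAt.2 fun q => ?_) _)
    have hnear := NonemptyCompacts.exists_dist_lt_of_dist_lt q.2 (q.1.2.subset (mem_range_self i))
    exact ContinuousAt.comp (continuousAt_nearPoint (hsep b₀) hnear) (by fun_prop)
  continuous_invFun := by
    have := discreteTopology_subtype_range_eq (ι := Fin n) hr (hsep b₀)
    refine Continuous.subtype_mk (Continuous.subtype_mk ?_ _) _
    refine (continuous_subtype_val.comp continuous_fst).prodMk <| continuous_pi fun i =>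
      continuous_prod_of_discrete_right.2 fun f => continuous_iff_continuousAt.2 fun b => ?_
    refine ContinuousAt.comp (f := Subtype.val)
      (continuousAt_nearPoint_of_continuousAt hV.continuousAt hsep ?_) (by fun_prop)
    exact NonemptyCompacts.exists_dist_lt_of_dist_lt (mem_ball'.1 b.2)
      (f.2.subset (mem_range_self i))

theorem isEvenlyCovered_proj (hV : Continuous V) (hr : 0 < r)
    (hsep : ∀ b, (V b : Set E).Pairwise (r < dist · ·)) (b₀ : B) :
    IsEvenlyCovered (proj : EnumBundle V n → B) b₀ {f : Fin n → E // range f = V b₀} :=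
  ⟨discreteTopology_subtype_range_eq hr (hsep b₀), V ⁻¹' ball (V b₀) (r / 2),
    mem_ball_self (half_pos hr),
    isOpen_ball.preimage hV, (isOpen_ball.preimage hV).preimage continuous_proj,
    localTriv hV hr hsep b₀, fun _ => rfl⟩

theorem isCoveringMap_proj (hV : Continuous V) (hr : 0 < r)
    (hsep : ∀ b, (V b : Set E).Pairwise (r < dist · ·)) :
    IsCoveringMap (proj : EnumBundle V n → B) := fun b₀ =>
  (isEvenlyCovered_proj hV hr hsep b₀).to_isEvenlyCovered_preimage

end EnumBundle

end

theorem IsUniformlyDiscrete.pairwise_lt_dist {d : ℕ} {r : ℝ} {L : Set (Euc d)}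
    (h : IsUniformlyDiscrete r L) : L.Pairwise (r < dist · ·) := by
  intro x hx y hy hxy
  by_contra! hle
  exact hxy (h x ⟨hx, mem_closedBall_self (dist_nonneg.trans hle)⟩
    ⟨hy, mem_closedBall.2 (by rwa [dist_comm])⟩)

namespace DelPair

variable {d n : ℕ} {r R : ℝ}

theorem continuous_snd_val : Continuous fun p : DelPair d r R n => p.1.2 :=
  continuous_snd.comp continuous_subtype_val

theorem pairwise_lt_dist (p : DelPair d r R n) : (p.1.2 : Set (Euc d)).Pairwise (r < dist · ·) :=
  p.2.1.1.pairwise_lt_dist.mono p.2.2.1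

end DelPair

theorem orderCover_isCoveringMap_general (d : ℕ) (r R : ℝ) (hr : 0 < r)
    (n : ℕ) (hn : 0 < n) :
    IsCoveringMap (ocProj d r R n) ∧
      ∀ p : DelPair d r R n,
        Nat.card {q : OrderCover d r R n // ocProj d r R n q = p} = Nat.factorial n :=
  ⟨EnumBundle.isCoveringMap_proj DelPair.continuous_snd_val hr DelPair.pairwise_lt_dist,
    fun p => EnumBundle.card_fiber (V := fun p : DelPair d r R n => p.1.2)
      (Set.finite_of_ncard_pos (hn.trans_eq p.2.2.2.symm)) p.2.2.2⟩

/-- The order cover `ÔDel^(n)_{(r,R)}(ℝ^d)`, whose points are triples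
`(L, V, χ_V)` with `(L,V) ∈ Del^(n)_{(r,R)}(ℝ^d)` and `χ_V : {1,…,n} → V` a bijection,
carries a topology making the projection `(L, V, χ_V) ↦ (L, V)` a covering map whose
fibers have cardinality `n!`. -/
theorem orderCover_isCoveringMap (d : ℕ) (hd : 0 < d) (r R : ℝ) (hr : 0 < r)
    (hrR : r < R) (n : ℕ) (hn : 0 < n) :
    IsCoveringMap (ocProj d r R n) ∧
      ∀ p : DelPair d r R n,
        Nat.card {q : OrderCover d r R n // ocProj d r R n q = p} = Nat.factorial n :=
  orderCover_isCoveringMap_general d r R hr n hn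
end
end
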